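/- arXiv:1812.01979 — 2 statements merged into one kernel-verified Lean document; each statement's English description precedes it below -/
import Mathlib

section
/- (Proposition 3.4, equation (3.15).) If A, B ∈ V satisfy g(A, X) = dα(X) and g(B, X) = dβ(X) for all X ∈ V (the gradients of α and β), then Qξ = −(2n(α₀² + β₀²) − dβ(ξ))ξ + (2n−1)B + φ(A). -/
/-- The Ricci tensor: `Ric R Y Z` is the trace of the linear map `X ↦ R X Y Z`. -/
noncomputable def Ric {V : Type*} [AddCommGroup V] [Module ℝ V]
    (R : V →ₗ[ℝ] V →ₗ[ℝ] V →ₗ[ℝ] V) (Y Z : V) : ℝ :=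
  LinearMap.trace ℝ V ((LinearMap.applyₗ Z).comp (R.flip Y))

/-!
Pair symmetry and the antisymmetry in the last two slots give
`g(R(X,ξ)Y, W) = -g(R(Y,W)ξ, X)`, so the trans-para-Sasakian identity determines the map
`X ↦ R(X,ξ)Y` explicitly: it is a combination of rank-one maps onto `ξ`, `A`, `B`, a multiple
of the identity and a multiple of `φ`. Its trace `Ric(ξ,Y)` follows, since `φ` is `g`-skew and
hence traceless while the identity has trace `dim V = 2n+1`; nondegeneracy of `g` then recovers
`Qξ` from `g(Qξ, ·) = Ric(ξ, ·)`.
-/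

namespace LinearMap.BilinForm

variable {K V : Type*} [Field K] [AddCommGroup V] [Module K V] {B : LinearMap.BilinForm K V}

theorem Nondegenerate.ext (hB : B.Nondegenerate) {u v : V} (h : ∀ w, B u w = B v w) : u = v :=
  LinearMap.ker_eq_bot.mp hB.ker_eq_bot (LinearMap.ext h)

theorem trace_eq_zero_of_isSkewAdjoint [CharZero K] [FiniteDimensional K V]
    (hB : B.Nondegenerate) {f : V →ₗ[K] V} (hf : IsSkewAdjoint B f) : trace K V f = 0 := by
  have hconj : (B.toDual hB).conj f = Module.Dual.transpose (-f) := by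
    ext l x
    obtain ⟨y, rfl⟩ := (B.toDual hB).surjective l
    simp [LinearEquiv.conj_apply_apply, toDual_def, Module.Dual.transpose_apply, hf y x]
  have := trace_conj' f (B.toDual hB)
  rw [hconj, trace_transpose', map_neg] at this
  exact neg_eq_self.mp this

end LinearMap.BilinForm

section ParacontactCurvature

variable {V : Type*} [AddCommGroup V] [Module ℝ V]

structure IsAlmostParacontactMetric (g : LinearMap.BilinForm ℝ V) (φ : V →ₗ[ℝ] V) (ξ : V)
    (η : V →ₗ[ℝ] ℝ) : Prop where
  symm : ∀ X Y, g X Y = g Y X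
  φ_ξ : φ ξ = 0
  η_φ : ∀ X, η (φ X) = 0
  η_ξ : η ξ = 1
  φ_φ : ∀ X, φ (φ X) = X - η X • ξ
  g_φ_φ : ∀ X Y, g (φ X) (φ Y) = -g X Y + η X * η Y

def IsTransParaSasakianCurvature (R : V →ₗ[ℝ] V →ₗ[ℝ] V →ₗ[ℝ] V) (φ : V →ₗ[ℝ] V) (ξ : V)
    (η : V →ₗ[ℝ] ℝ) (α₀ β₀ : ℝ) (dα dβ : V →ₗ[ℝ] ℝ) : Prop :=
  ∀ X Y : V, R X Y ξ =
      -((α₀ ^ 2 + β₀ ^ 2) • (η Y • X - η X • Y))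
      - (2 * α₀ * β₀) • (η Y • φ X - η X • φ Y)
      - dα X • φ Y + dα Y • φ X + dβ Y • φ (φ X) - dβ X • φ (φ Y)

namespace IsAlmostParacontactMetric

variable {g : LinearMap.BilinForm ℝ V} {φ : V →ₗ[ℝ] V} {ξ : V} {η : V →ₗ[ℝ] ℝ}
  (h : IsAlmostParacontactMetric g φ ξ η) {R : V →ₗ[ℝ] V →ₗ[ℝ] V →ₗ[ℝ] V}
  {α₀ β₀ : ℝ} {dα dβ : V →ₗ[ℝ] ℝ} {A B : V}
include h

theorem g_ξ (X : V) : g ξ X = η X := by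
  have := h.g_φ_φ ξ X
  rw [h.φ_ξ, h.η_ξ, map_zero, LinearMap.zero_apply, one_mul] at this
  linarith

theorem g_φ_ξ (X : V) : g (φ X) ξ = 0 := by
  rw [h.symm, h.g_ξ, h.η_φ]

theorem isSkewAdjoint : LinearMap.IsSkewAdjoint g φ := by
  intro X Y
  have := h.g_φ_φ X (φ Y)
  rw [h.η_φ, mul_zero, add_zero, h.φ_φ, map_sub, map_smul, smul_eq_mul, h.g_φ_ξ, mul_zero,
    sub_zero] at this
  simp [this]

theorem g_φ_swap (X Y : V) : g (φ X) Y = -g (φ Y) X := by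
  rw [h.isSkewAdjoint, h.symm, Pi.neg_apply, map_neg, LinearMap.neg_apply]

theorem trace_φ [FiniteDimensional ℝ V] (hg : g.Nondegenerate) : LinearMap.trace ℝ V φ = 0 :=
  LinearMap.BilinForm.trace_eq_zero_of_isSkewAdjoint hg h.isSkewAdjoint

theorem g_curvature_ξ (hR_a2 : ∀ X Y Z W : V, g (R X Y Z) W = - g (R X Y W) Z)
    (hR_pair : ∀ X Y Z W : V, g (R X Y Z) W = g (R Z W X) Y)
    (hTPS : IsTransParaSasakianCurvature R φ ξ η α₀ β₀ dα dβ)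
    (hA : ∀ X : V, g A X = dα X) (hB : ∀ X : V, g B X = dβ X) (X Y W : V) :
    g (R X ξ Y) W =
      ((α₀ ^ 2 + β₀ ^ 2) * g Y X + 2 * α₀ * β₀ * g (φ Y) X - dβ Y * η X) * η W
      + (dβ Y - (α₀ ^ 2 + β₀ ^ 2) * η Y) * g X W
      + (2 * α₀ * β₀ * η Y - dα Y) * g (φ X) W
      - g (φ Y) X * g A W - g (φ (φ Y)) X * g B W := by
  rw [hR_pair, hR_a2, hTPS, h.φ_φ W]
  simp only [map_sub, map_add, map_neg, map_smul, LinearMap.sub_apply, LinearMap.add_apply,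
    LinearMap.neg_apply, LinearMap.smul_apply, smul_eq_mul, hA, hB, h.g_ξ]
  rw [h.g_φ_swap W X, h.symm W X]
  ring

theorem ric_ξ [FiniteDimensional ℝ V] (hg : g.Nondegenerate)
    (hR_a2 : ∀ X Y Z W : V, g (R X Y Z) W = - g (R X Y W) Z)
    (hR_pair : ∀ X Y Z W : V, g (R X Y Z) W = g (R Z W X) Y)
    (hTPS : IsTransParaSasakianCurvature R φ ξ η α₀ β₀ dα dβ)
    (hA : ∀ X : V, g A X = dα X) (hB : ∀ X : V, g B X = dβ X) (Y : V) :
    Ric R ξ Y = (dβ ξ - (Module.finrank ℝ V - 1) * (α₀ ^ 2 + β₀ ^ 2)) * η Y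
      + (Module.finrank ℝ V - 2) * dβ Y - dα (φ Y) := by
  have hop : (LinearMap.applyₗ Y).comp (R.flip ξ) =
      ((α₀ ^ 2 + β₀ ^ 2) • g Y + (2 * α₀ * β₀) • g (φ Y) - dβ Y • η).smulRight ξ
      + (dβ Y - (α₀ ^ 2 + β₀ ^ 2) * η Y) • LinearMap.id + (2 * α₀ * β₀ * η Y - dα Y) • φ
      - (g (φ Y)).smulRight A - (g (φ (φ Y))).smulRight B := by
    ext X
    refine hg.ext fun W => ?_
    rw [LinearMap.comp_apply, LinearMap.applyₗ_apply_apply, LinearMap.flip_apply,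
      h.g_curvature_ξ hR_a2 hR_pair hTPS hA hB]
    simp only [LinearMap.add_apply, LinearMap.sub_apply, LinearMap.smul_apply,
      LinearMap.smulRight_apply, LinearMap.id_apply, map_add, map_sub, map_smul, smul_eq_mul,
      h.g_ξ]
  rw [Ric, hop]
  simp only [map_add, map_sub, map_smul, LinearMap.trace_smulRight, LinearMap.trace_id,
    h.trace_φ hg, LinearMap.add_apply, LinearMap.sub_apply, LinearMap.smul_apply, smul_eq_mul]
  rw [h.symm Y ξ, h.g_ξ, h.g_φ_ξ, h.η_ξ, h.symm _ A, hA, h.symm _ B, hB, h.φ_φ, map_sub, map_smul]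
  ring

end IsAlmostParacontactMetric

end ParacontactCurvature

theorem stmt_7_general
    (n : ℕ)
    (V : Type*) [AddCommGroup V] [Module ℝ V] [FiniteDimensional ℝ V]
    (hdim : Module.finrank ℝ V = 2 * n + 1)
    (g : LinearMap.BilinForm ℝ V)
    (hg_symm : ∀ X Y : V, g X Y = g Y X)
    (hg_nondeg : g.Nondegenerate)
    (φ : V →ₗ[ℝ] V) (ξ : V) (η : V →ₗ[ℝ] ℝ)
    (hφξ : φ ξ = 0) (hηφ : ∀ X : V, η (φ X) = 0)
    (hηξ : η ξ = 1) (hφ2 : ∀ X : V, φ (φ X) = X - η X • ξ)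
    (hgφ : ∀ X Y : V, g (φ X) (φ Y) = - g X Y + η X * η Y)
    (R : V →ₗ[ℝ] V →ₗ[ℝ] V →ₗ[ℝ] V)
    (hR_a2 : ∀ X Y Z W : V, g (R X Y Z) W = - g (R X Y W) Z)
    (hR_pair : ∀ X Y Z W : V, g (R X Y Z) W = g (R Z W X) Y)
    (α₀ β₀ : ℝ) (dα dβ : V →ₗ[ℝ] ℝ)
    (hTPS : ∀ X Y : V, R X Y ξ =
      -((α₀ ^ 2 + β₀ ^ 2) • (η Y • X - η X • Y))
      - (2 * α₀ * β₀) • (η Y • φ X - η X • φ Y)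
      - dα X • φ Y + dα Y • φ X + dβ Y • φ (φ X) - dβ X • φ (φ Y))
    (Qop : V →ₗ[ℝ] V) (hQ : ∀ X Y : V, g (Qop X) Y = Ric R X Y)
    (A B : V) (hA : ∀ X : V, g A X = dα X) (hB : ∀ X : V, g B X = dβ X)
    :
    Qop ξ = -(2 * (n : ℝ) * (α₀ ^ 2 + β₀ ^ 2) - dβ ξ) • ξ
      + (2 * (n : ℝ) - 1) • B + φ A := by
  have h : IsAlmostParacontactMetric g φ ξ η := ⟨hg_symm, hφξ, hηφ, hηξ, hφ2, hgφ⟩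
  refine hg_nondeg.ext fun W => ?_
  rw [hQ, h.ric_ξ hg_nondeg hR_a2 hR_pair hTPS hA hB, hdim]
  simp only [map_add, map_smul, LinearMap.add_apply, LinearMap.smul_apply, smul_eq_mul, h.g_ξ,
    hB, h.isSkewAdjoint A W, hA, Pi.neg_apply, map_neg]
  push_cast
  ring

theorem stmt_7
    (n : ℕ) (hn : 1 ≤ n)
    (V : Type*) [AddCommGroup V] [Module ℝ V] [FiniteDimensional ℝ V]
    (hdim : Module.finrank ℝ V = 2 * n + 1)
    (g : LinearMap.BilinForm ℝ V)
    (hg_symm : ∀ X Y : V, g X Y = g Y X)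
    (hg_nondeg : g.Nondegenerate)
    (φ : V →ₗ[ℝ] V) (ξ : V) (η : V →ₗ[ℝ] ℝ)
    (hφξ : φ ξ = 0) (hηφ : ∀ X : V, η (φ X) = 0)
    (hηξ : η ξ = 1) (hφ2 : ∀ X : V, φ (φ X) = X - η X • ξ)
    (hgφ : ∀ X Y : V, g (φ X) (φ Y) = - g X Y + η X * η Y)
    (R : V →ₗ[ℝ] V →ₗ[ℝ] V →ₗ[ℝ] V)
    (hR_a1 : ∀ X Y Z W : V, g (R X Y Z) W = - g (R Y X Z) W)
    (hR_a2 : ∀ X Y Z W : V, g (R X Y Z) W = - g (R X Y W) Z)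
    (hR_pair : ∀ X Y Z W : V, g (R X Y Z) W = g (R Z W X) Y)
    (α₀ β₀ : ℝ) (dα dβ : V →ₗ[ℝ] ℝ)
    (hTPS : ∀ X Y : V, R X Y ξ =
      -((α₀ ^ 2 + β₀ ^ 2) • (η Y • X - η X • Y))
      - (2 * α₀ * β₀) • (η Y • φ X - η X • φ Y)
      - dα X • φ Y + dα Y • φ X + dβ Y • φ (φ X) - dβ X • φ (φ Y))
    (Qop : V →ₗ[ℝ] V) (hQ : ∀ X Y : V, g (Qop X) Y = Ric R X Y)
    (scal : ℝ) (hscal : scal = LinearMap.trace ℝ V Qop)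
    (A B : V) (hA : ∀ X : V, g A X = dα X) (hB : ∀ X : V, g B X = dβ X)
    :
    Qop ξ = -(2 * (n : ℝ) * (α₀ ^ 2 + β₀ ^ 2) - dβ ξ) • ξ
      + (2 * (n : ℝ) - 1) • B + φ A :=
  stmt_7_general n V hdim g hg_symm hg_nondeg φ ξ η hφξ hηφ hηξ hφ2 hgφ R hR_a2 hR_pair α₀ β₀ dα dβ
    hTPS Qop hQ A B hA hB
end

section
/- (Theorem 3.8.) If the Weyl conformal curvature tensor vanishes, i.e. C(X,Y)Z = 0 for all X, Y, Z ∈ V, then Ric(X,Y) = ((α₀² + β₀²) + scal/(2n))·g(X,Y) − ((2n+1)(α₀² + β₀²) + scal/(2n))·η(X)η(Y) for all X, Y ∈ V (the manifold is η-Einstein). -/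
open LinearMap (trace BilinForm IsAdjointPair)
open Module (finrank)

theorem LinearMap.BilinForm.trace_eq_of_isAdjointPair {K V : Type*} [Field K] [AddCommGroup V]
    [Module K V] [FiniteDimensional K V] {g : BilinForm K V} (hg : g.Nondegenerate)
    {f f' : V →ₗ[K] V} (h : IsAdjointPair g g f f') : trace K V f = trace K V f' := by
  have hconj : (g.toDual hg).conj f = Module.Dual.transpose f' := by
    ext ψ x
    simp [LinearEquiv.conj_apply, BilinForm.toDual_def, h _ x,
      BilinForm.apply_toDual_symm_apply, Module.Dual.transpose_apply]
  rw [← LinearMap.trace_conj' f (g.toDual hg), hconj, LinearMap.trace_transpose']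

section

variable {V : Type*} [AddCommGroup V] [Module ℝ V]

theorem Ric_comm [FiniteDimensional ℝ V] {g : BilinForm ℝ V} (hg_symm : ∀ X Y, g X Y = g Y X)
    (hg : g.Nondegenerate) {R : V →ₗ[ℝ] V →ₗ[ℝ] V →ₗ[ℝ] V}
    (hR_a2 : ∀ X Y Z W, g (R X Y Z) W = -g (R X Y W) Z)
    (hR_pair : ∀ X Y Z W, g (R X Y Z) W = g (R Z W X) Y) (Y Z : V) :
    Ric R Y Z = Ric R Z Y := by
  refine g.trace_eq_of_isAdjointPair hg fun X W => ?_
  simp only [LinearMap.comp_apply, LinearMap.flip_apply, LinearMap.applyₗ_apply_apply]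
  rw [hg_symm X, hR_pair W, hR_a2 Y, hR_pair Y, hR_a2 Z, hR_pair Z, neg_neg]

structure IsAlmostParacontactMetric_s11 (g : BilinForm ℝ V) (φ : V →ₗ[ℝ] V) (ξ : V)
    (η : V →ₗ[ℝ] ℝ) : Prop where
  symm : ∀ X Y, g X Y = g Y X
  φ_ξ : φ ξ = 0
  η_φ : ∀ X, η (φ X) = 0
  η_ξ : η ξ = 1
  φ_φ : ∀ X, φ (φ X) = X - η X • ξ
  g_φ_φ : ∀ X Y, g (φ X) (φ Y) = -g X Y + η X * η Y

def transParaSasakianCurvatureξ (φ : V →ₗ[ℝ] V) (η : V →ₗ[ℝ] ℝ) (α₀ β₀ : ℝ)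
    (dα dβ : V →ₗ[ℝ] ℝ) (X Y : V) : V :=
  -((α₀ ^ 2 + β₀ ^ 2) • (η Y • X - η X • Y))
    - (2 * α₀ * β₀) • (η Y • φ X - η X • φ Y)
    - dα X • φ Y + dα Y • φ X + dβ Y • φ (φ X) - dβ X • φ (φ Y)

namespace IsAlmostParacontactMetric_s11

variable {g : BilinForm ℝ V} {φ : V →ₗ[ℝ] V} {ξ : V} {η : V →ₗ[ℝ] ℝ}
  {R : V →ₗ[ℝ] V →ₗ[ℝ] V →ₗ[ℝ] V} {α₀ β₀ : ℝ} {dα dβ : V →ₗ[ℝ] ℝ} {A B : V} {c : ℝ}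

theorem g_ξ_left (h : IsAlmostParacontactMetric_s11 g φ ξ η) (Y : V) : g ξ Y = η Y := by
  have := h.g_φ_φ ξ Y
  rw [h.φ_ξ, map_zero, LinearMap.zero_apply, h.η_ξ, one_mul] at this
  linarith

theorem g_ξ_right (h : IsAlmostParacontactMetric_s11 g φ ξ η) (X : V) : g X ξ = η X := by
  rw [h.symm, h.g_ξ_left]

theorem g_φ_left (h : IsAlmostParacontactMetric_s11 g φ ξ η) (X Y : V) :
    g (φ X) Y = -g X (φ Y) := by
  have := h.g_φ_φ (φ X) Y
  simp only [h.φ_φ, map_sub, map_smul, LinearMap.sub_apply, LinearMap.smul_apply, h.g_ξ_left,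
    h.η_φ, smul_zero, sub_zero, zero_mul, add_zero] at this
  linarith

theorem trace_φ_s11 [FiniteDimensional ℝ V] (h : IsAlmostParacontactMetric_s11 g φ ξ η)
    (hg : g.Nondegenerate) : trace ℝ V φ = 0 := by
  have := g.trace_eq_of_isAdjointPair hg (f := φ) (f' := -φ) fun X Y => by
    rw [LinearMap.neg_apply, map_neg, h.g_φ_left]
  rw [map_neg] at this
  linarith

theorem trace_φ_comp_φ [FiniteDimensional ℝ V] (h : IsAlmostParacontactMetric_s11 g φ ξ η) :
    trace ℝ V (φ ∘ₗ φ) = finrank ℝ V - 1 := by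
  have : φ ∘ₗ φ = LinearMap.id - η.smulRight ξ := by
    ext X
    simp [h.φ_φ]
  rw [this, map_sub, LinearMap.trace_id, LinearMap.trace_smulRight, h.η_ξ]

theorem φ_ne_zero [FiniteDimensional ℝ V] (h : IsAlmostParacontactMetric_s11 g φ ξ η)
    (hV : 1 < finrank ℝ V) : φ ≠ 0 := by
  rintro rfl
  have := h.trace_φ_comp_φ
  rw [LinearMap.zero_comp, map_zero] at this
  have : (1 : ℝ) < finrank ℝ V := by exact_mod_cast hV
  linarith

theorem η_eq_zero_of_φ_eq_smul (h : IsAlmostParacontactMetric_s11 g φ ξ η) (hc : c ≠ 0)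
    (hAB : φ A = -(c • B)) : η B = 0 := by
  have := h.η_φ A
  rw [hAB, map_neg, map_smul, smul_eq_mul, neg_eq_zero] at this
  exact (mul_eq_zero.mp this).resolve_left hc

theorem dβ_ξ (h : IsAlmostParacontactMetric_s11 g φ ξ η) (hB : ∀ X, g B X = dβ X) (hc : c ≠ 0)
    (hAB : φ A = -(c • B)) : dβ ξ = 0 := by
  rw [← hB, h.g_ξ_right, h.η_eq_zero_of_φ_eq_smul hc hAB]

theorem dα_φ (h : IsAlmostParacontactMetric_s11 g φ ξ η) (hA : ∀ X, g A X = dα X)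
    (hB : ∀ X, g B X = dβ X) (hAB : φ A = -(c • B)) (Y : V) : dα (φ Y) = c * dβ Y := by
  rw [← hA, ← hB, ← neg_neg (g A (φ Y)), ← h.g_φ_left, hAB]
  simp

theorem dα_ξ [FiniteDimensional ℝ V] (h : IsAlmostParacontactMetric_s11 g φ ξ η)
    (hg : g.Nondegenerate) (hV : 1 < finrank ℝ V)
    (hR_a2 : ∀ X Y Z W, g (R X Y Z) W = -g (R X Y W) Z)
    (hR_pair : ∀ X Y Z W, g (R X Y Z) W = g (R Z W X) Y)
    (hR : ∀ X Y, R X Y ξ = transParaSasakianCurvatureξ φ η α₀ β₀ dα dβ X Y)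
    (hdβ : dβ ξ = 0) : dα ξ = 2 * α₀ * β₀ := by
  have hφ : ∀ X, (dα ξ - 2 * α₀ * β₀) • φ X = 0 := fun X => hg.1 _ fun W => by
    have hpair : g (R X ξ ξ) W = -g (R ξ W ξ) X := by rw [hR_pair, hR_a2]
    simp only [hR, transParaSasakianCurvatureξ, h.φ_ξ, h.η_ξ, hdβ, map_sub, map_add, map_neg,
      map_smul, map_zero, LinearMap.sub_apply, LinearMap.add_apply, LinearMap.neg_apply,
      LinearMap.smul_apply, smul_eq_mul, h.g_ξ_left, smul_zero, zero_mul,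
      sub_zero, zero_sub, add_zero, one_smul] at hpair
    rw [map_smul, LinearMap.smul_apply, smul_eq_mul]
    linear_combination (1 / 2) * hpair + ((α₀ ^ 2 + β₀ ^ 2) / 2) * h.symm X W
      + ((dα ξ - 2 * α₀ * β₀) / 2) * (h.symm (φ W) X + h.g_φ_left X W)
  by_contra hne
  exact h.φ_ne_zero hV <| LinearMap.ext fun X =>
    (smul_eq_zero.mp (hφ X)).resolve_left (sub_ne_zero.mpr hne)

theorem Ric_apply_ξ [FiniteDimensional ℝ V] (h : IsAlmostParacontactMetric_s11 g φ ξ η)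
    (hg : g.Nondegenerate) {n : ℕ} (hdim : finrank ℝ V = 2 * n + 1)
    (hR : ∀ X Y, R X Y ξ = transParaSasakianCurvatureξ φ η α₀ β₀ dα dβ X Y)
    (hdβ : dβ ξ = 0) (hdαφ : ∀ Y, dα (φ Y) = (2 * n - 1) * dβ Y) (Y : V) :
    Ric R Y ξ = -(2 * n * (α₀ ^ 2 + β₀ ^ 2)) * η Y := by
  have hmap : (LinearMap.applyₗ ξ).comp (R.flip Y) =
      (-((α₀ ^ 2 + β₀ ^ 2) * η Y)) • LinearMap.id + (α₀ ^ 2 + β₀ ^ 2) • η.smulRight Y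
      + (-(2 * α₀ * β₀ * η Y)) • φ + (2 * α₀ * β₀) • η.smulRight (φ Y)
      - dα.smulRight (φ Y) + dα Y • φ + dβ Y • (φ ∘ₗ φ) - dβ.smulRight (φ (φ Y)) := by
    ext X
    simp only [LinearMap.comp_apply, LinearMap.applyₗ_apply_apply, LinearMap.flip_apply,
      hR, transParaSasakianCurvatureξ, LinearMap.add_apply, LinearMap.sub_apply,
      LinearMap.smul_apply, LinearMap.id_apply, LinearMap.smulRight_apply]
    module
  have hdβφφ : dβ (φ (φ Y)) = dβ Y := by simp [h.φ_φ, hdβ]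
  rw [Ric, hmap]
  simp only [map_add, map_sub, map_smul, LinearMap.trace_id, LinearMap.trace_smulRight,
    h.trace_φ_s11 hg, h.trace_φ_comp_φ, hdim, smul_eq_mul, hdαφ, hdβφφ, h.η_φ]
  push_cast
  ring

theorem g_R_ξ_apply_ξ (h : IsAlmostParacontactMetric_s11 g φ ξ η)
    (hR_a2 : ∀ X Y Z W, g (R X Y Z) W = -g (R X Y W) Z)
    (hR : ∀ X Y, R X Y ξ = transParaSasakianCurvatureξ φ η α₀ β₀ dα dβ X Y)
    (hdα : dα ξ = 2 * α₀ * β₀) (hdβ : dβ ξ = 0) (X Y : V) :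
    g (R ξ X Y) ξ = (α₀ ^ 2 + β₀ ^ 2) * (η X * η Y - g X Y) := by
  rw [hR_a2, hR]
  simp only [transParaSasakianCurvatureξ, h.φ_ξ, h.η_ξ, hdα, hdβ, map_sub, map_neg,
    map_smul, map_zero, LinearMap.sub_apply, LinearMap.neg_apply,
    LinearMap.smul_apply, smul_eq_mul, h.g_ξ_left, smul_zero, zero_mul, sub_zero, zero_sub,
    add_zero, one_smul]
  ring

end IsAlmostParacontactMetric_s11

end

theorem stmt_11_general
    (n : ℕ) (hn : 1 ≤ n)
    (V : Type*) [AddCommGroup V] [Module ℝ V] [FiniteDimensional ℝ V]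
    (hdim : Module.finrank ℝ V = 2 * n + 1)
    (g : LinearMap.BilinForm ℝ V)
    (hg_symm : ∀ X Y : V, g X Y = g Y X)
    (hg_nondeg : g.Nondegenerate)
    (φ : V →ₗ[ℝ] V) (ξ : V) (η : V →ₗ[ℝ] ℝ)
    (hφξ : φ ξ = 0) (hηφ : ∀ X : V, η (φ X) = 0)
    (hηξ : η ξ = 1) (hφ2 : ∀ X : V, φ (φ X) = X - η X • ξ)
    (hgφ : ∀ X Y : V, g (φ X) (φ Y) = - g X Y + η X * η Y)
    (R : V →ₗ[ℝ] V →ₗ[ℝ] V →ₗ[ℝ] V)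
    (hR_a2 : ∀ X Y Z W : V, g (R X Y Z) W = - g (R X Y W) Z)
    (hR_pair : ∀ X Y Z W : V, g (R X Y Z) W = g (R Z W X) Y)
    (α₀ β₀ : ℝ) (dα dβ : V →ₗ[ℝ] ℝ)
    (hTPS : ∀ X Y : V, R X Y ξ =
      -((α₀ ^ 2 + β₀ ^ 2) • (η Y • X - η X • Y))
      - (2 * α₀ * β₀) • (η Y • φ X - η X • φ Y)
      - dα X • φ Y + dα Y • φ X + dβ Y • φ (φ X) - dβ X • φ (φ Y))
    (Qop : V →ₗ[ℝ] V) (hQ : ∀ X Y : V, g (Qop X) Y = Ric R X Y)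
    (scal : ℝ)
    (A B : V) (hA : ∀ X : V, g A X = dα X) (hB : ∀ X : V, g B X = dβ X)
    (hgrad : φ A = -((2 * (n : ℝ) - 1) • B))
    (C : V → V → V → V)
    (hC : ∀ X Y Z : V, C X Y Z = R X Y Z
      - (1 / (2 * (n : ℝ) - 1)) • (g Y Z • Qop X - g X Z • Qop Y
        + Ric R Y Z • X - Ric R X Z • Y)
      + (scal / (2 * (n : ℝ) * (2 * (n : ℝ) - 1))) • (g Y Z • X - g X Z • Y))
    (hflat : ∀ X Y Z : V, C X Y Z = 0)
    :
    ∀ X Y : V, Ric R X Y =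
      ((α₀ ^ 2 + β₀ ^ 2) + scal / (2 * (n : ℝ))) * g X Y
      - ((2 * (n : ℝ) + 1) * (α₀ ^ 2 + β₀ ^ 2) + scal / (2 * (n : ℝ))) * (η X * η Y) := by
  intro X Y
  have hP : IsAlmostParacontactMetric_s11 g φ ξ η := ⟨hg_symm, hφξ, hηφ, hηξ, hφ2, hgφ⟩
  have hn' : (1 : ℝ) ≤ n := by exact_mod_cast hn
  have hdβ : dβ ξ = 0 := hP.dβ_ξ hB (by linarith) hgrad
  have hdα : dα ξ = 2 * α₀ * β₀ :=
    hP.dα_ξ hg_nondeg (by omega) hR_a2 hR_pair hTPS hdβ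
  have hRic : ∀ Z, Ric R Z ξ = -(2 * n * (α₀ ^ 2 + β₀ ^ 2)) * η Z :=
    hP.Ric_apply_ξ hg_nondeg hdim hTPS hdβ (hP.dα_φ hA hB hgrad)
  have hRξ := hP.g_R_ξ_apply_ξ hR_a2 hTPS hdα hdβ X Y
  rw [hP.g_ξ_right] at hRξ
  have hweyl := congrArg (g · ξ) (hflat ξ X Y)
  simp only [hC, map_add, map_sub, map_smul, LinearMap.add_apply, LinearMap.sub_apply,
    LinearMap.smul_apply, smul_eq_mul, map_zero, LinearMap.zero_apply, hQ, hP.g_ξ_left,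
    hP.g_ξ_right, hηξ, hRξ, hRic,
    Ric_comm hg_symm hg_nondeg hR_a2 hR_pair ξ Y] at hweyl
  have h2n1 : (2 * n - 1 : ℝ) ≠ 0 := by linarith
  have h2n : (2 * n : ℝ) ≠ 0 := by linarith
  field_simp at hweyl ⊢
  linear_combination -hweyl

theorem stmt_11
    (n : ℕ) (hn : 1 ≤ n)
    (V : Type*) [AddCommGroup V] [Module ℝ V] [FiniteDimensional ℝ V]
    (hdim : Module.finrank ℝ V = 2 * n + 1)
    (g : LinearMap.BilinForm ℝ V)
    (hg_symm : ∀ X Y : V, g X Y = g Y X)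
    (hg_nondeg : g.Nondegenerate)
    (φ : V →ₗ[ℝ] V) (ξ : V) (η : V →ₗ[ℝ] ℝ)
    (hφξ : φ ξ = 0) (hηφ : ∀ X : V, η (φ X) = 0)
    (hηξ : η ξ = 1) (hφ2 : ∀ X : V, φ (φ X) = X - η X • ξ)
    (hgφ : ∀ X Y : V, g (φ X) (φ Y) = - g X Y + η X * η Y)
    (R : V →ₗ[ℝ] V →ₗ[ℝ] V →ₗ[ℝ] V)
    (hR_a1 : ∀ X Y Z W : V, g (R X Y Z) W = - g (R Y X Z) W)
    (hR_a2 : ∀ X Y Z W : V, g (R X Y Z) W = - g (R X Y W) Z)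
    (hR_pair : ∀ X Y Z W : V, g (R X Y Z) W = g (R Z W X) Y)
    (α₀ β₀ : ℝ) (dα dβ : V →ₗ[ℝ] ℝ)
    (hTPS : ∀ X Y : V, R X Y ξ =
      -((α₀ ^ 2 + β₀ ^ 2) • (η Y • X - η X • Y))
      - (2 * α₀ * β₀) • (η Y • φ X - η X • φ Y)
      - dα X • φ Y + dα Y • φ X + dβ Y • φ (φ X) - dβ X • φ (φ Y))
    (Qop : V →ₗ[ℝ] V) (hQ : ∀ X Y : V, g (Qop X) Y = Ric R X Y)
    (scal : ℝ) (hscal : scal = LinearMap.trace ℝ V Qop)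
    (A B : V) (hA : ∀ X : V, g A X = dα X) (hB : ∀ X : V, g B X = dβ X)
    (hgrad : φ A = -((2 * (n : ℝ) - 1) • B))
    (C : V → V → V → V)
    (hC : ∀ X Y Z : V, C X Y Z = R X Y Z
      - (1 / (2 * (n : ℝ) - 1)) • (g Y Z • Qop X - g X Z • Qop Y
        + Ric R Y Z • X - Ric R X Z • Y)
      + (scal / (2 * (n : ℝ) * (2 * (n : ℝ) - 1))) • (g Y Z • X - g X Z • Y))
    (hflat : ∀ X Y Z : V, C X Y Z = 0)
    :
    ∀ X Y : V, Ric R X Y =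
      ((α₀ ^ 2 + β₀ ^ 2) + scal / (2 * (n : ℝ))) * g X Y
      - ((2 * (n : ℝ) + 1) * (α₀ ^ 2 + β₀ ^ 2) + scal / (2 * (n : ℝ))) * (η X * η Y) :=
  stmt_11_general n hn V hdim g hg_symm hg_nondeg φ ξ η hφξ hηφ hηξ hφ2 hgφ R hR_a2 hR_pair α₀ β₀ dα
    dβ hTPS Qop hQ scal A B hA hB hgrad C hC hflat
end
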